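/- Let f : ℝ → ℝ be continuously differentiable and suppose limsup_{|r|→∞} |f(r)| / (|r| ln²|r|) ≤ β for some β > 0. Define f̂(r) := (f(r) − f(0))/r for r ≠ 0 and f̂(0) := f'(0). Then there exists γ > 0 such that for all r ∈ ℝ, |f̂(r)| ≤ γ + 2β ln²(1 + |r|). -/

import Mathlib

/-- If `f ∈ C¹` satisfies `limsup_{|r|→∞} |f r|/(|r| ln²|r|) ≤ β`, then the
difference quotient `f̂` satisfies `|f̂ r| ≤ γ + 2β ln²(1+|r|)` for some `γ > 0`. -/
theorem difference_quotient_log_growth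
    (f : ℝ → ℝ) (hf : ContDiff ℝ 1 f) (β : ℝ) (hβ : 0 < β)
    (hgrowth : ∀ ε > 0, ∃ M > 0, ∀ r : ℝ, M ≤ |r| →
      |f r| ≤ (β + ε) * |r| * (Real.log |r|) ^ 2) :
    ∃ γ > 0, ∀ r : ℝ,
      |if r = 0 then deriv f 0 else (f r - f 0) / r|
        ≤ γ + 2 * β * (Real.log (1 + |r|)) ^ 2 := by
  obtain ⟨M, hMpos, hbound⟩ := hgrowth β hβ
  set M' : ℝ := max M 1 with hM'def
  have hM'1 : (1:ℝ) ≤ M' := le_max_right _ _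
  have hM'0 : (0:ℝ) < M' := lt_of_lt_of_le one_pos hM'1
  have hdiff : Differentiable ℝ f := hf.differentiable one_ne_zero
  have hder : Continuous (deriv f) := hf.continuous_deriv le_rfl
  have h0mem : (0:ℝ) ∈ Set.Icc (-M') M' := ⟨by linarith, by linarith⟩
  obtain ⟨c0, hc0mem, hc0max⟩ :=
    isCompact_Icc.exists_isMaxOn ⟨0, h0mem⟩
      ((continuous_abs.comp hder).continuousOn :
        ContinuousOn (fun x => |deriv f x|) (Set.Icc (-M') M'))
  set C := |deriv f c0| with hCdef
  have hC0 : 0 ≤ C := abs_nonneg _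
  refine ⟨C + |f 0| + 1, by positivity, fun r => ?_⟩
  have hlogsq : 0 ≤ 2 * β * (Real.log (1 + |r|)) ^ 2 := by positivity
  by_cases h0 : r = 0
  · subst h0
    rw [if_pos rfl]
    have hle : |deriv f 0| ≤ C := hc0max h0mem
    have : Real.log (1 + |(0:ℝ)|) = 0 := by norm_num
    rw [this]
    nlinarith [abs_nonneg (f 0)]
  rw [if_neg h0]
  rcases le_or_gt |r| M' with hcase | hcase
  · -- interior case: use MVT
    have hslope : ∃ c ∈ Set.Icc (-M') M', deriv f c = (f r - f 0) / r := by
      rcases lt_or_gt_of_ne h0 with hr | hr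
      · obtain ⟨c, hc, hceq⟩ := exists_hasDerivAt_eq_slope f (deriv f) hr
          (hdiff.continuous.continuousOn)
          (fun x _ => (hdiff x).hasDerivAt)
        refine ⟨c, ⟨?_, ?_⟩, ?_⟩
        · have : -M' ≤ r := by
            have := neg_le_of_abs_le hcase; linarith
          linarith [hc.1]
        · linarith [hc.2, hM'0]
        · rw [hceq, zero_sub, ← neg_sub (f r) (f 0), neg_div_neg_eq]
      · obtain ⟨c, hc, hceq⟩ := exists_hasDerivAt_eq_slope f (deriv f) hr
          (hdiff.continuous.continuousOn)
          (fun x _ => (hdiff x).hasDerivAt)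
        refine ⟨c, ⟨?_, ?_⟩, ?_⟩
        · linarith [hc.1, hM'0]
        · have : r ≤ M' := le_of_abs_le hcase
          linarith [hc.2]
        · rw [hceq]; simp
    obtain ⟨c, hcmem, hceq⟩ := hslope
    rw [← hceq]
    have hle : |deriv f c| ≤ C := hc0max hcmem
    linarith [abs_nonneg (f 0)]
  · -- tail case
    have hMr : M ≤ |r| := le_trans (le_max_left M 1) hcase.le
    have h1r : (1:ℝ) ≤ |r| := le_trans hM'1 hcase.le
    have hrpos : (0:ℝ) < |r| := by linarith
    have hb := hbound r hMr
    have hlog0 : 0 ≤ Real.log |r| := Real.log_nonneg h1r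
    have hlogle : Real.log |r| ≤ Real.log (1 + |r|) :=
      Real.log_le_log hrpos (by linarith)
    have hsq : (Real.log |r|) ^ 2 ≤ (Real.log (1 + |r|)) ^ 2 := by nlinarith
    have habs : |(f r - f 0) / r| = |f r - f 0| / |r| := abs_div _ _
    rw [habs]
    have h1 : |f r - f 0| ≤ |f r| + |f 0| := abs_sub _ _
    have key : |f r - f 0| ≤ 2 * β * |r| * (Real.log |r|) ^ 2 + |f 0| := by linarith
    rw [div_le_iff₀ hrpos]
    nlinarith [mul_nonneg (mul_nonneg (by linarith : (0:ℝ) ≤ 2*β)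
        (by linarith : (0:ℝ) ≤ (Real.log (1+|r|))^2 - (Real.log |r|)^2)) hrpos.le,
      mul_nonneg (abs_nonneg (f 0)) (by linarith : (0:ℝ) ≤ |r| - 1),
      mul_nonneg hC0 hrpos.le]
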